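/- arXiv:2005.01521 — 2 statements merged into one kernel-verified Lean document; each statement's English description precedes it below -/
import Mathlib

section
/- Let V be a finite-dimensional real inner product space, R ⊂ V an irreducible reduced root system spanning V, with Weyl group W ⊂ O(V), and let a ∈ V be a nonzero dominant minuscule coweight, i.e. a is dominant with respect to a base of R and (α, a) ∈ {0, 1, −1} for every α ∈ R. Then the subspace of vectors of V fixed by the stabilizer W_a of a in W is exactly the line ℝ·a. -/
open scoped RealInnerProductSpace

variable {V : Type*} [NormedAddCommGroup V] [InnerProductSpace ℝ V] [FiniteDimensional ℝ V]

/-- The orthogonal reflection in the hyperplane orthogonal to `α`. -/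
noncomputable def rootReflection (α : V) : V → V :=
  fun v => v - (2 * ⟪v, α⟫ / ⟪α, α⟫) • α

/-- `R` is a reduced root system in `V`. -/
def IsReducedRootSystem (R : Set V) : Prop :=
  R.Finite ∧ (0 : V) ∉ R ∧
    (∀ α ∈ R, ∀ t : ℝ, t • α ∈ R → t = 1 ∨ t = -1) ∧
    (∀ α ∈ R, ∀ β ∈ R, rootReflection α β ∈ R) ∧
    (∀ α ∈ R, ∀ β ∈ R, ∃ m : ℤ, 2 * ⟪β, α⟫ / ⟪α, α⟫ = (m : ℝ))

/-- The Weyl group of `R`: the subgroup of the orthogonal group of `V` generated by the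
reflections in the roots of `R`. -/
noncomputable def weylGroup (R : Set V) : Subgroup (V ≃ₗᵢ[ℝ] V) :=
  Subgroup.closure {w | ∃ α ∈ R, ∀ v : V, w v = rootReflection α v}

/-- Two vectors lie in the same irreducible component of `R`: the equivalence relation
generated by non-orthogonality of roots. -/
def SameComponent (R : Set V) : V → V → Prop :=
  Relation.EqvGen fun x y => x ∈ R ∧ y ∈ R ∧ ⟪x, y⟫ ≠ 0

/-- `a` is minuscule: for every irreducible component `Rᵢ` of `R`, the set of inner
products `{(α, a) : α ∈ Rᵢ}` has at most `3` elements. -/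
def IsMinuscule (R : Set V) (a : V) : Prop :=
  ∀ α ∈ R, ({t : ℝ | ∃ β ∈ R, SameComponent R α β ∧ ⟪β, a⟫ = t}).ncard ≤ 3

/-- `Δ` is a base of the root system `R`: a linearly independent subset of `R` such that
every root is a linear combination of elements of `Δ` with integer coefficients, all of
the same sign. -/
def IsBase (R Δ : Set V) : Prop :=
  Δ ⊆ R ∧ LinearIndependent ℝ ((↑) : Δ → V) ∧
    ∀ α ∈ R, ∃ c : V →₀ ℤ, (c.support : Set V) ⊆ Δ ∧
      ((∀ β, 0 ≤ c β) ∨ (∀ β, c β ≤ 0)) ∧ α = c.sum fun β m => (m : ℝ) • β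

/-! Reflections in roots orthogonal to `a` lie in `W_a`, so a vector `v` fixed by `W_a` is
orthogonal to all those roots. As `R` spans, it then suffices that `α ↦ ⟪v, α⟫` is proportional to
`α ↦ ⟪α, a⟫` on `R`. For non-orthogonal roots `x ≠ y` with `⟪x, a⟫ = ⟪y, a⟫ = 1`, minusculity
forces `x - y` or `y - x` to be a root, orthogonal to `a`, so `⟪v, x⟫ = ⟪v, y⟫`. Irreducibility,
together with reflections in roots orthogonal to `a` (which preserve both `⟪·, a⟫` and `⟪v, ·⟫`),
links any two roots with `⟪·, a⟫ = 1` by such steps. -/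

section

variable {E : Type*} [NormedAddCommGroup E] [InnerProductSpace ℝ E]

lemma eq_zero_of_span_eq_top_of_forall_inner_eq_zero {s : Set E}
    (hs : Submodule.span ℝ s = ⊤) {u : E} (h : ∀ x ∈ s, ⟪x, u⟫ = 0) : u = 0 := by
  have : innerₛₗ ℝ u = 0 := LinearMap.ext_on hs fun x hx => by
    simpa [real_inner_comm] using h x hx
  simpa using LinearMap.congr_fun this u

lemma inner_self_ne_zero_of_inner_ne_zero {x u : E} (h : ⟪x, u⟫ ≠ 0) : ⟪x, x⟫ ≠ 0 :=
  inner_self_ne_zero.mpr fun hx => h (by simp [hx])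

lemma rootReflection_self {α : E} (hα : α ≠ 0) : rootReflection α α = -α := by
  have : ⟪α, α⟫ ≠ 0 := inner_self_ne_zero.mpr hα
  simp only [rootReflection, mul_div_assoc, div_self this]
  module

lemma rootReflection_eq_self_iff (α v : E) : rootReflection α v = v ↔ ⟪v, α⟫ = 0 := by
  rcases eq_or_ne α 0 with rfl | hα
  · simp [rootReflection]
  simp [rootReflection, hα]

lemma inner_rootReflection (α v u : E) :
    ⟪rootReflection α v, u⟫ = ⟪v, u⟫ - 2 * ⟪v, α⟫ / ⟪α, α⟫ * ⟪α, u⟫ := by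
  simp [rootReflection, inner_sub_left, real_inner_smul_left]

lemma reflection_orthogonal_singleton_apply (α u : E) :
    Submodule.reflection (ℝ ∙ α)ᗮ u = rootReflection α u := by
  rw [Submodule.reflection_apply, Submodule.starProjection_orthogonal_val,
    Submodule.starProjection_singleton]
  simp only [rootReflection, RCLike.ofReal_real_eq_id, id_eq]
  rw [real_inner_comm u α, real_inner_self_eq_norm_sq]
  match_scalars <;> ring

lemma reflection_mem_weylGroup {R : Set E} {α : E} (hα : α ∈ R) :
    Submodule.reflection (ℝ ∙ α)ᗮ ∈ weylGroup R :=
  Subgroup.subset_closure ⟨α, hα, reflection_orthogonal_singleton_apply α⟩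

lemma inner_eq_zero_of_forall_stabilizer_fixed {R : Set E} {a v : E}
    (hv : ∀ w ∈ weylGroup R, w a = a → w v = v) {α : E} (hα : α ∈ R) (hαa : ⟪α, a⟫ = 0) :
    ⟪v, α⟫ = 0 := by
  have hfix := (rootReflection_eq_self_iff α a).mpr (by rwa [real_inner_comm])
  rw [← reflection_orthogonal_singleton_apply] at hfix
  have := hv _ (reflection_mem_weylGroup hα) hfix
  rwa [reflection_orthogonal_singleton_apply, rootReflection_eq_self_iff] at this

section Minuscule

variable {R : Set E} {a : E}

lemma neg_mem_of_inner_eq_neg_one (hrefl : ∀ α ∈ R, ∀ β ∈ R, rootReflection α β ∈ R)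
    {x : E} (hx : x ∈ R) (hxa : ⟪x, a⟫ = -1) : -x ∈ R ∧ ⟪-x, a⟫ = 1 := by
  have hx0 : x ≠ 0 := by rintro rfl; simp at hxa
  exact ⟨rootReflection_self hx0 ▸ hrefl x hx x hx, by simp [inner_neg_left, hxa]⟩

lemma exists_mem_inner_eq_one (hrefl : ∀ α ∈ R, ∀ β ∈ R, rootReflection α β ∈ R)
    (hspan : Submodule.span ℝ R = ⊤) (ha0 : a ≠ 0)
    (hmin : ∀ α ∈ R, ⟪α, a⟫ = 0 ∨ ⟪α, a⟫ = 1 ∨ ⟪α, a⟫ = -1) :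
    ∃ β ∈ R, ⟪β, a⟫ = 1 := by
  obtain ⟨γ, hγ, hγa⟩ : ∃ γ ∈ R, ⟪γ, a⟫ ≠ 0 := by
    by_contra! h
    exact ha0 (eq_zero_of_span_eq_top_of_forall_inner_eq_zero hspan h)
  rcases hmin γ hγ with h | h | h
  · exact absurd h hγa
  · exact ⟨γ, hγ, h⟩
  · exact ⟨-γ, neg_mem_of_inner_eq_neg_one hrefl hγ h⟩

lemma two_mul_inner_div_eq_one_or_two (hrefl : ∀ α ∈ R, ∀ β ∈ R, rootReflection α β ∈ R)
    (hmin : ∀ α ∈ R, ⟪α, a⟫ = 0 ∨ ⟪α, a⟫ = 1 ∨ ⟪α, a⟫ = -1)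
    {x y : E} (hx : x ∈ R) (hy : y ∈ R) (hxa : ⟪x, a⟫ = 1) (hya : ⟪y, a⟫ = 1)
    (hxy : ⟪x, y⟫ ≠ 0) :
    2 * ⟪y, x⟫ / ⟪x, x⟫ = 1 ∨ 2 * ⟪y, x⟫ / ⟪x, x⟫ = 2 := by
  have hx0 : ⟪x, x⟫ ≠ 0 := inner_self_ne_zero_of_inner_ne_zero (hxa ▸ one_ne_zero)
  have hn0 : 2 * ⟪y, x⟫ / ⟪x, x⟫ ≠ 0 := by
    rw [real_inner_comm]; exact div_ne_zero (mul_ne_zero two_ne_zero hxy) hx0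
  have := hmin _ (hrefl x hx y hy)
  rw [inner_rootReflection, hxa, hya] at this
  rcases this with h | h | h
  · left; linarith
  · exact absurd (by linarith) hn0
  · right; linarith

lemma eq_or_sub_mem_of_inner_eq_one (hrefl : ∀ α ∈ R, ∀ β ∈ R, rootReflection α β ∈ R)
    (hmin : ∀ α ∈ R, ⟪α, a⟫ = 0 ∨ ⟪α, a⟫ = 1 ∨ ⟪α, a⟫ = -1)
    {x y : E} (hx : x ∈ R) (hy : y ∈ R) (hxa : ⟪x, a⟫ = 1) (hya : ⟪y, a⟫ = 1)
    (hxy : ⟪x, y⟫ ≠ 0) :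
    x = y ∨ x - y ∈ R ∨ y - x ∈ R := by
  have hyx : ⟪y, x⟫ ≠ 0 := by rwa [real_inner_comm]
  rcases two_mul_inner_div_eq_one_or_two hrefl hmin hx hy hxa hya hxy with hn | hn
  · right; right
    have := hrefl x hx y hy
    rwa [rootReflection, hn, one_smul] at this
  rcases two_mul_inner_div_eq_one_or_two hrefl hmin hy hx hya hxa hyx with hm | hm
  · right; left
    have := hrefl y hy x hx
    rwa [rootReflection, hm, one_smul] at this
  left
  have hx0 : ⟪x, x⟫ ≠ 0 := inner_self_ne_zero_of_inner_ne_zero (hxa ▸ one_ne_zero)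
  have hy0 : ⟪y, y⟫ ≠ 0 := inner_self_ne_zero_of_inner_ne_zero (hya ▸ one_ne_zero)
  rw [div_eq_iff hx0] at hn
  rw [div_eq_iff hy0] at hm
  rw [← sub_eq_zero, ← inner_self_eq_zero (𝕜 := ℝ), inner_sub_sub_self]
  linarith

variable {v : E}

lemma inner_eq_of_inner_eq_one (hrefl : ∀ α ∈ R, ∀ β ∈ R, rootReflection α β ∈ R)
    (hmin : ∀ α ∈ R, ⟪α, a⟫ = 0 ∨ ⟪α, a⟫ = 1 ∨ ⟪α, a⟫ = -1)
    (hv : ∀ α ∈ R, ⟪α, a⟫ = 0 → ⟪v, α⟫ = 0)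
    {x y : E} (hx : x ∈ R) (hy : y ∈ R) (hxa : ⟪x, a⟫ = 1) (hya : ⟪y, a⟫ = 1)
    (hxy : ⟪x, y⟫ ≠ 0) :
    ⟪v, x⟫ = ⟪v, y⟫ := by
  rcases eq_or_sub_mem_of_inner_eq_one hrefl hmin hx hy hxa hya hxy with rfl | h | h
  · rfl
  · have := hv _ h (by rw [inner_sub_left, hxa, hya, sub_self])
    rwa [inner_sub_right, sub_eq_zero] at this
  · have := hv _ h (by rw [inner_sub_left, hxa, hya, sub_self])
    rwa [inner_sub_right, sub_eq_zero, eq_comm] at this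

/-- Unlike `⟪y, a⟫ = 1 ∧ ⟪v, y⟫ = c` itself, this survives the steps of a `SameComponent` chain
through roots orthogonal to `a`. -/
def HasLevelOneNeighbor (R : Set E) (a v : E) (c : ℝ) (y : E) : Prop :=
  ∃ x ∈ R, ⟪x, a⟫ = 1 ∧ ⟪v, x⟫ = c ∧ ⟪x, y⟫ ≠ 0

lemma HasLevelOneNeighbor.of_inner_ne_zero
    (hrefl : ∀ α ∈ R, ∀ β ∈ R, rootReflection α β ∈ R)
    (hmin : ∀ α ∈ R, ⟪α, a⟫ = 0 ∨ ⟪α, a⟫ = 1 ∨ ⟪α, a⟫ = -1)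
    (hv : ∀ α ∈ R, ⟪α, a⟫ = 0 → ⟪v, α⟫ = 0) {c : ℝ} {y z : E} (hy : y ∈ R)
    (hyz : ⟪y, z⟫ ≠ 0) (h : HasLevelOneNeighbor R a v c y) :
    HasLevelOneNeighbor R a v c z := by
  obtain ⟨x, hx, hxa, hxc, hxy⟩ := h
  rcases hmin y hy with hya | hya | hya
  · by_cases hxz : ⟪x, z⟫ = 0
    -- then the reflection of `x` in `y` is not orthogonal to `z`
    · refine ⟨rootReflection y x, hrefl y hy x hx, ?_, ?_, ?_⟩
      · rw [inner_rootReflection, hya, hxa]; ring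
      · rw [real_inner_comm, inner_rootReflection, real_inner_comm v x, real_inner_comm v y,
          hv y hy hya, hxc]; ring
      · have hy0 : ⟪y, y⟫ ≠ 0 := inner_self_ne_zero_of_inner_ne_zero hyz
        rw [inner_rootReflection, hxz, zero_sub, neg_ne_zero]
        exact mul_ne_zero (div_ne_zero (mul_ne_zero two_ne_zero hxy) hy0) hyz
    · exact ⟨x, hx, hxa, hxc, hxz⟩
  · have := inner_eq_of_inner_eq_one hrefl hmin hv hx hy hxa hya hxy
    exact ⟨y, hy, hya, this ▸ hxc, hyz⟩
  · obtain ⟨hy', hya'⟩ := neg_mem_of_inner_eq_neg_one hrefl hy hya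
    have := inner_eq_of_inner_eq_one hrefl hmin hv hx hy' hxa hya'
      (by rwa [inner_neg_right, neg_ne_zero])
    exact ⟨-y, hy', hya', this ▸ hxc, by rwa [inner_neg_left, neg_ne_zero]⟩

lemma HasLevelOneNeighbor.iff_of_sameComponent
    (hrefl : ∀ α ∈ R, ∀ β ∈ R, rootReflection α β ∈ R)
    (hmin : ∀ α ∈ R, ⟪α, a⟫ = 0 ∨ ⟪α, a⟫ = 1 ∨ ⟪α, a⟫ = -1)
    (hv : ∀ α ∈ R, ⟪α, a⟫ = 0 → ⟪v, α⟫ = 0) {c : ℝ} {y z : E} (h : SameComponent R y z) :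
    HasLevelOneNeighbor R a v c y ↔ HasLevelOneNeighbor R a v c z := by
  have hequiv : Equivalence fun y z =>
      (HasLevelOneNeighbor R a v c y ↔ HasLevelOneNeighbor R a v c z) :=
    ⟨fun _ => Iff.rfl, Iff.symm, Iff.trans⟩
  refine hequiv.eqvGen_iff.mp (Relation.EqvGen.mono ?_ y z h)
  rintro y z ⟨hy, hz, hyz⟩
  exact ⟨.of_inner_ne_zero hrefl hmin hv hy hyz,
    .of_inner_ne_zero hrefl hmin hv hz (by rwa [real_inner_comm])⟩

lemma inner_eq_mul_inner_of_irreducible (hrefl : ∀ α ∈ R, ∀ β ∈ R, rootReflection α β ∈ R)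
    (hirr : ∀ α ∈ R, ∀ β ∈ R, SameComponent R α β)
    (hmin : ∀ α ∈ R, ⟪α, a⟫ = 0 ∨ ⟪α, a⟫ = 1 ∨ ⟪α, a⟫ = -1)
    (hv : ∀ α ∈ R, ⟪α, a⟫ = 0 → ⟪v, α⟫ = 0) {β : E} (hβ : β ∈ R) (hβa : ⟪β, a⟫ = 1)
    {γ : E} (hγ : γ ∈ R) :
    ⟪v, γ⟫ = ⟪v, β⟫ * ⟪γ, a⟫ := by
  have hβ0 : ⟪β, β⟫ ≠ 0 := inner_self_ne_zero_of_inner_ne_zero (hβa ▸ one_ne_zero)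
  have hlevel : ∀ δ ∈ R, ⟪δ, a⟫ = 1 → ⟪v, δ⟫ = ⟪v, β⟫ := by
    intro δ hδ hδa
    obtain ⟨x, hx, hxa, hxc, hxδ⟩ := (HasLevelOneNeighbor.iff_of_sameComponent hrefl hmin hv
      (hirr β hβ δ hδ)).mp ⟨β, hβ, hβa, rfl, hβ0⟩
    rw [← hxc, inner_eq_of_inner_eq_one hrefl hmin hv hx hδ hxa hδa hxδ]
  rcases hmin γ hγ with hγa | hγa | hγa
  · rw [hγa, mul_zero, hv γ hγ hγa]
  · rw [hγa, mul_one, hlevel γ hγ hγa]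
  · obtain ⟨hγ', hγa'⟩ := neg_mem_of_inner_eq_neg_one hrefl hγ hγa
    have := hlevel _ hγ' hγa'
    rw [inner_neg_right] at this
    rw [hγa]; linarith

end Minuscule

end

theorem fixed_space_of_stabilizer_of_minuscule_coweight_general
    (R : Set V) (hR : IsReducedRootSystem R)
    (hspan : Submodule.span ℝ R = ⊤)
    (hirr : ∀ α ∈ R, ∀ β ∈ R, SameComponent R α β)
    (a : V) (ha0 : a ≠ 0)
    (hmin : ∀ α ∈ R, ⟪α, a⟫ = 0 ∨ ⟪α, a⟫ = 1 ∨ ⟪α, a⟫ = -1)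
    (v : V) :
    (∀ w ∈ weylGroup R, w a = a → w v = v) ↔ ∃ t : ℝ, v = t • a := by
  have hrefl := hR.2.2.2.1
  refine ⟨fun hv => ?_, ?_⟩
  · have hvM : ∀ α ∈ R, ⟪α, a⟫ = 0 → ⟪v, α⟫ = 0 := fun α hα hαa =>
      inner_eq_zero_of_forall_stabilizer_fixed hv hα hαa
    obtain ⟨β, hβ, hβa⟩ := exists_mem_inner_eq_one hrefl hspan ha0 hmin
    refine ⟨⟪v, β⟫, sub_eq_zero.mp (eq_zero_of_span_eq_top_of_forall_inner_eq_zero hspan ?_)⟩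
    intro γ hγ
    rw [inner_sub_right, inner_smul_right, real_inner_comm v γ,
      inner_eq_mul_inner_of_irreducible hrefl hirr hmin hvM hβ hβa hγ, sub_self]
  · rintro ⟨t, rfl⟩ w _ hwa
    rw [map_smul, hwa]

theorem fixed_space_of_stabilizer_of_minuscule_coweight
    (R : Set V) (hR : IsReducedRootSystem R)
    (hspan : Submodule.span ℝ R = ⊤)
    (hirr : ∀ α ∈ R, ∀ β ∈ R, SameComponent R α β)
    (a : V) (ha0 : a ≠ 0)
    (Δ : Set V) (hΔ : IsBase R Δ)
    (hdom : ∀ α ∈ Δ, 0 ≤ ⟪α, a⟫)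
    (hmin : ∀ α ∈ R, ⟪α, a⟫ = 0 ∨ ⟪α, a⟫ = 1 ∨ ⟪α, a⟫ = -1)
    (v : V) :
    (∀ w ∈ weylGroup R, w a = a → w v = v) ↔ ∃ t : ℝ, v = t • a :=
  fixed_space_of_stabilizer_of_minuscule_coweight_general R hR hspan hirr a ha0 hmin v
end

section
/- Let V be a finite-dimensional real inner product space, R ⊂ V an irreducible reduced root system spanning V with Weyl group W ⊂ O(V), and let a ∈ V be a nonzero dominant minuscule coweight of R. Then the linear polynomial function v ↦ (a, v) on V belongs to the ℝ-subalgebra of polynomial functions on V generated by the W-invariant polynomial functions f and their translates v ↦ f(v + a). (Concretely, applying v ↦ f(v+a) − f(v) to the W-invariant quadratic function 𝔯₂(v) = Σ_{α∈R} (α, v)² yields 4λ(a, v) + 2N, where N = |{α ∈ R : (α,a) = 1}| and λ = N/(a,a) > 0.) -/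
open scoped RealInnerProductSpace

variable {V : Type*} [NormedAddCommGroup V] [InnerProductSpace ℝ V] [FiniteDimensional ℝ V]

/-- A polynomial function on `V`: an element of the `ℝ`-subalgebra of `V → ℝ`
generated by the linear functionals. -/
def IsPolyFun {M : Type*} [AddCommGroup M] [Module ℝ M] (f : M → ℝ) : Prop :=
  f ∈ Algebra.adjoin ℝ {g : M → ℝ | ∃ l : M →ₗ[ℝ] ℝ, g = ⇑l}

section AuxMinuscule
set_option linter.unusedSectionVars false

variable {V : Type*} [NormedAddCommGroup V] [InnerProductSpace ℝ V] [FiniteDimensional ℝ V]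

lemma rr_adjoint' (α u v : V) : ⟪rootReflection α u, v⟫ = ⟪u, rootReflection α v⟫ := by
  simp only [rootReflection, inner_sub_left, inner_sub_right, real_inner_smul_left,
    real_inner_smul_right]
  rw [show (⟪α,v⟫:ℝ) = ⟪v,α⟫ from real_inner_comm v α]
  ring

lemma rr_self' (α : V) (hα : α ≠ 0) : rootReflection α α = -α := by
  have h : ⟪α, α⟫ ≠ 0 := inner_self_ne_zero.mpr hα
  have h2 : 2 * ⟪α, α⟫ / ⟪α, α⟫ = 2 := by field_simp
  simp only [rootReflection, h2]
  module

lemma rr_invol' (α : V) (v : V) : rootReflection α (rootReflection α v) = v := by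
  rcases eq_or_ne α 0 with rfl | hα
  · simp [rootReflection]
  have h : ⟪α, α⟫ ≠ 0 := inner_self_ne_zero.mpr hα
  simp only [rootReflection, inner_sub_left, real_inner_smul_left]
  match_scalars
  · ring
  · field_simp
    ring

lemma rr_add (α u v : V) : rootReflection α (u + v) = rootReflection α u + rootReflection α v := by
  simp only [rootReflection, inner_add_left]
  match_scalars <;> ring

lemma rr_smul (α : V) (c : ℝ) (v : V) : rootReflection α (c • v) = c • rootReflection α v := by
  simp only [rootReflection, real_inner_smul_left, smul_sub, smul_smul]
  match_scalars <;> ring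

lemma rr_neg_fixed (α x : V) (hα : α ≠ 0) (hx : rootReflection α x = -x) :
    ∃ c : ℝ, x = c • α := by
  have h : ⟪α, α⟫ ≠ 0 := inner_self_ne_zero.mpr hα
  refine ⟨⟪x, α⟫ / ⟪α, α⟫, ?_⟩
  have h2 : (2 : ℝ) • x = (2 * ⟪x, α⟫ / ⟪α, α⟫) • α := by
    have := hx
    simp only [rootReflection] at this
    have h3 : x - (2 * ⟪x, α⟫ / ⟪α, α⟫) • α + x = 0 := by rw [this]; abel
    have h4 : (2:ℝ) • x = x + x := two_smul ℝ x
    rw [h4]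
    linear_combination (norm := module) h3
  have := congrArg (fun y => (2:ℝ)⁻¹ • y) h2
  simpa [smul_smul, mul_div_assoc] using this
  
lemma rr_sum' (α : V) {ι : Type*} (t : Finset ι) (f : ι → V) :
    rootReflection α (∑ i ∈ t, f i) = ∑ i ∈ t, rootReflection α (f i) := by
  classical
  induction t using Finset.cons_induction with
  | empty => simp [rootReflection]
  | cons i t hi ih => rw [Finset.sum_cons, Finset.sum_cons, rr_add, ih]

lemma rr_reindex' {M : Type*} [AddCommMonoid M] (α : V) (R : Set V) (hfin : R.Finite)
    (hcl : ∀ β ∈ R, rootReflection α β ∈ R) (F : V → M) :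
    ∑ β ∈ hfin.toFinset, F (rootReflection α β) = ∑ β ∈ hfin.toFinset, F β := by
  refine Finset.sum_nbij' (i := fun β => rootReflection α β) (j := fun β => rootReflection α β)
    ?_ ?_ ?_ ?_ ?_
  · intro β hβ
    rw [hfin.mem_toFinset] at *
    exact hcl β hβ
  · intro β hβ
    rw [hfin.mem_toFinset] at *
    exact hcl β hβ
  · intro β _; exact rr_invol' α β
  · intro β _; exact rr_invol' α β
  · intro β _; rfl

end AuxMinuscule

theorem linear_form_of_minuscule_coweight_in_translated_invariants
    (R : Set V) (hR : IsReducedRootSystem R)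
    (hspan : Submodule.span ℝ R = ⊤)
    (hirr : ∀ α ∈ R, ∀ β ∈ R, SameComponent R α β)
    (a : V) (ha0 : a ≠ 0)
    (Δ : Set V) (hΔ : IsBase R Δ)
    (hdom : ∀ α ∈ Δ, 0 ≤ ⟪α, a⟫)
    (hmin : ∀ α ∈ R, ⟪α, a⟫ = 0 ∨ ⟪α, a⟫ = 1 ∨ ⟪α, a⟫ = -1) :
    (fun v : V => ⟪a, v⟫) ∈ Algebra.adjoin ℝ
      ({g : V → ℝ | IsPolyFun g ∧ ∀ w ∈ weylGroup R, ∀ v : V, g (w v) = g v} ∪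
       {g : V → ℝ | ∃ h : V → ℝ,
          (IsPolyFun h ∧ ∀ w ∈ weylGroup R, ∀ v : V, h (w v) = h v) ∧
          g = fun v => h (v + a)}) := by
  classical
  obtain ⟨hfin, h0, hred, hrefl, hint⟩ := hR
  set Rf := hfin.toFinset with hRfdef
  have hmem : ∀ {α : V}, α ∈ Rf ↔ α ∈ R := fun {α} => hfin.mem_toFinset
  have hne : ∀ α ∈ R, α ≠ 0 := fun α hα h => h0 (h ▸ hα)
  have haspan : (a : V) ∈ Submodule.span ℝ R := hspan ▸ Submodule.mem_top
  have hRne : R.Nonempty := by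
    rcases R.eq_empty_or_nonempty with h | h
    · exfalso; apply ha0
      rw [h] at haspan; simpa using haspan
    · exact h
  obtain ⟨α₀, hα₀⟩ := hRne
  -- the operator T
  set T : V →ₗ[ℝ] V := ∑ α ∈ Rf, (innerSL ℝ α).toLinearMap.smulRight α with hTdef
  have hTapp : ∀ v, T v = ∑ α ∈ Rf, ⟪α, v⟫ • α := by
    intro v; simp [hTdef]
  have hTadj : ∀ u v, ⟪T u, v⟫ = ⟪u, T v⟫ := by
    intro u v
    rw [hTapp, hTapp]
    rw [sum_inner, inner_sum]
    refine Finset.sum_congr rfl fun α _ => ?_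
    rw [real_inner_smul_left, real_inner_smul_right, real_inner_comm α u]
    ring
  have hcl : ∀ α ∈ R, ∀ β ∈ R, rootReflection α β ∈ R := hrefl
  -- T commutes with reflections
  have hcomm : ∀ α ∈ R, ∀ v, T (rootReflection α v) = rootReflection α (T v) := by
    intro α hα v
    rw [hTapp, hTapp, rr_sum']
    have e1 : ∑ β ∈ Rf, (⟪β, rootReflection α v⟫ : ℝ) • β
        = ∑ β ∈ Rf, (⟪rootReflection α β, v⟫ : ℝ) • β := by
      refine Finset.sum_congr rfl fun β _ => ?_
      rw [rr_adjoint']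
    rw [e1]
    have e2 := rr_reindex' α R hfin (hcl α hα)
      (fun β => (⟪rootReflection α β, v⟫ : ℝ) • β)
    rw [← e2]
    refine Finset.sum_congr rfl fun β _ => ?_
    rw [rr_invol', rr_smul]
  -- eigenvalues
  set μ : V → ℝ := fun α => ⟪α, T α⟫ / ⟪α, α⟫ with hμdef
  have hμ : ∀ α ∈ R, T α = μ α • α := by
    intro α hα
    have hαne := hne α hα
    have h : (⟪α, α⟫ : ℝ) ≠ 0 := inner_self_ne_zero.mpr hαne
    obtain ⟨c, hc⟩ : ∃ c : ℝ, T α = c • α := by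
      apply rr_neg_fixed α (T α) hαne
      rw [← hcomm α hα α, rr_self' α hαne, map_neg]
    have : μ α = c := by
      simp only [hμdef, hc, real_inner_smul_right]
      field_simp
    rw [this, hc]
  have hsame : ∀ x y : V, SameComponent R x y →
      ((x ∈ R ↔ y ∈ R) ∧ (x ∈ R → μ x = μ y)) := by
    intro x y h
    induction h with
    | rel x y hxy =>
      obtain ⟨hx, hy, hnz⟩ := hxy
      refine ⟨⟨fun _ => hy, fun _ => hx⟩, fun _ => ?_⟩
      have h1 : ⟪T x, y⟫ = ⟪x, T y⟫ := hTadj x y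
      rw [hμ x hx, hμ y hy, real_inner_smul_left, real_inner_smul_right] at h1
      exact mul_right_cancel₀ hnz h1
    | refl x => exact ⟨Iff.rfl, fun _ => rfl⟩
    | symm x y _ ih => exact ⟨ih.1.symm, fun hy => (ih.2 (ih.1.mpr hy)).symm⟩
    | trans x y z _ _ ih1 ih2 =>
      exact ⟨ih1.1.trans ih2.1, fun hx => (ih1.2 hx).trans (ih2.2 (ih1.1.mp hx))⟩
  set lam := μ α₀ with hlamdef
  have hall : ∀ α ∈ R, μ α = lam := fun α hα => (hsame α α₀ (hirr α hα α₀ hα₀)).2 hα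
  have hTlam : T = lam • (LinearMap.id : V →ₗ[ℝ] V) := by
    apply LinearMap.ext_on hspan
    intro x hx
    rw [hμ x hx, hall x hx]
    simp
  have hTa : T a = lam • a := by rw [hTlam]; simp
  -- lam ≠ 0
  have hTaa : ⟪T a, a⟫ = ∑ α ∈ Rf, (⟪α, a⟫ : ℝ) ^ 2 := by
    rw [hTapp, sum_inner]
    refine Finset.sum_congr rfl fun α _ => ?_
    rw [real_inner_smul_left]; ring
  have hlam0 : lam ≠ 0 := by
    intro h
    have hz : ∑ α ∈ Rf, (⟪α, a⟫ : ℝ) ^ 2 = 0 := by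
      rw [← hTaa, hTa, h, zero_smul, inner_zero_left]
    have hzz : ∀ α ∈ Rf, (⟪α, a⟫ : ℝ) ^ 2 = 0 :=
      (Finset.sum_eq_zero_iff_of_nonneg fun α _ => sq_nonneg _).mp hz
    have horth : ∀ α ∈ R, (⟪a, α⟫ : ℝ) = 0 := by
      intro α hα
      have := hzz α (hmem.mpr hα)
      rw [real_inner_comm]
      exact pow_eq_zero_iff (n := 2) (by norm_num) |>.mp this
    have : Submodule.span ℝ R ≤ LinearMap.ker ((innerSL ℝ a).toLinearMap) := by
      rw [Submodule.span_le]
      intro α hα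
      simpa using horth α hα
    have ha' := this haspan
    simp only [LinearMap.mem_ker, ContinuousLinearMap.coe_coe, innerSL_apply_apply] at ha'
    exact ha0 (inner_self_eq_zero.mp ha')
  -- the invariant quadratic function
  set f : V → ℝ := fun v => ∑ α ∈ Rf, (⟪α, v⟫ : ℝ) ^ 2 with hfdef
  have hfpoly : IsPolyFun f := by
    unfold IsPolyFun
    have hf_eq : f = ∑ α ∈ Rf, (fun v : V => (⟪α, v⟫ : ℝ)) ^ 2 := by
      funext v
      simp [hfdef, Finset.sum_apply]
    rw [hf_eq]
    refine Subalgebra.sum_mem _ fun α _ => pow_mem ?_ 2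
    exact Algebra.subset_adjoin ⟨(innerSL ℝ α).toLinearMap, by funext v; simp⟩
  have hfinv : ∀ w ∈ weylGroup R, ∀ v : V, f (w v) = f v := by
    intro w hw
    unfold weylGroup at hw
    induction hw using Subgroup.closure_induction with
    | mem x hx =>
      obtain ⟨α, hα, hx⟩ := hx
      intro v
      rw [hx v]
      simp only [hfdef]
      have e1 : ∀ β : V, (⟪β, rootReflection α v⟫ : ℝ) ^ 2
          = (⟪rootReflection α β, v⟫ : ℝ) ^ 2 := by
        intro β; rw [rr_adjoint']
      calc ∑ β ∈ Rf, (⟪β, rootReflection α v⟫ : ℝ) ^ 2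
          = ∑ β ∈ Rf, (fun γ => (⟪γ, v⟫ : ℝ) ^ 2) (rootReflection α β) := by
            refine Finset.sum_congr rfl fun β _ => ?_
            rw [e1]
        _ = ∑ β ∈ Rf, (⟪β, v⟫ : ℝ) ^ 2 :=
            rr_reindex' α R hfin (hcl α hα) (fun γ => (⟪γ, v⟫ : ℝ) ^ 2)
    | one => intro v; simp
    | mul x y hx hy ihx ihy =>
      intro v
      have : (x * y) v = x (y v) := rfl
      rw [this, ihx, ihy]
    | inv x hx ih =>
      intro v
      have : x (x⁻¹ v) = v := by
        have : x⁻¹ = x.symm := rfl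
        rw [this]
        exact x.apply_symm_apply v
      conv_rhs => rw [← this, ih]
  -- membership of the two generators
  set A := Algebra.adjoin ℝ
      ({g : V → ℝ | IsPolyFun g ∧ ∀ w ∈ weylGroup R, ∀ v : V, g (w v) = g v} ∪
       {g : V → ℝ | ∃ h : V → ℝ,
          (IsPolyFun h ∧ ∀ w ∈ weylGroup R, ∀ v : V, h (w v) = h v) ∧
          g = fun v => h (v + a)}) with hAdef
  have hfA : f ∈ A := Algebra.subset_adjoin (Or.inl ⟨hfpoly, hfinv⟩)
  have hgA : (fun v : V => f (v + a)) ∈ A :=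
    Algebra.subset_adjoin (Or.inr ⟨f, ⟨hfpoly, hfinv⟩, rfl⟩)
  set C : ℝ := ∑ α ∈ Rf, (⟪α, a⟫ : ℝ) ^ 2 with hCdef
  have hkey : ∀ v : V, f (v + a) - f v = 2 * lam * ⟪a, v⟫ + C := by
    intro v
    have hTav : (⟪T a, v⟫ : ℝ) = ∑ α ∈ Rf, (⟪α, a⟫ : ℝ) * ⟪α, v⟫ := by
      rw [hTapp, sum_inner]
      refine Finset.sum_congr rfl fun α _ => ?_
      rw [real_inner_smul_left]
    have hTav2 : (⟪T a, v⟫ : ℝ) = lam * ⟪a, v⟫ := by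
      rw [hTa, real_inner_smul_left]
    have expand : f (v + a) = f v + 2 * (∑ α ∈ Rf, (⟪α, a⟫ : ℝ) * ⟪α, v⟫) + C := by
      simp only [hfdef, hCdef, inner_add_right]
      rw [Finset.mul_sum, ← Finset.sum_add_distrib, ← Finset.sum_add_distrib]
      refine Finset.sum_congr rfl fun α _ => ?_
      ring
    rw [expand, ← hTav, hTav2]
    ring
  have hfinal : (fun v : V => (⟪a, v⟫ : ℝ))
      = (2 * lam)⁻¹ • ((fun v : V => f (v + a)) - f - algebraMap ℝ (V → ℝ) C) := by
    funext v
    simp only [Pi.smul_apply, Pi.sub_apply, smul_eq_mul]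
    have := hkey v
    have h2lam : (2 : ℝ) * lam ≠ 0 := mul_ne_zero two_ne_zero hlam0
    rw [show ((algebraMap ℝ (V → ℝ) C) v) = C from rfl]
    field_simp
    linarith [hkey v]
  rw [hfinal]
  exact Subalgebra.smul_mem _ (sub_mem (sub_mem hgA hfA) (Subalgebra.algebraMap_mem _ C)) _
end
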